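/- arXiv:2306.12140 — 4 statements merged into one kernel-verified Lean document; each statement's English description precedes it below -/
import Mathlib

section
/- Let C ≥ 1 and let r_{ij} ≥ 0 for i,j ∈ {1,2,3,4} be numbers satisfying r_{ij} ≤ C·r_{ji} and r_{ij} ≤ C·(r_{ik} + r_{kj}) for all i,j,k ∈ {1,2,3,4}. Then r_{12}·r_{34} ≤ 4C⁴·max(r_{13}·r_{24}, r_{14}·r_{23}). -/
/-!
One use of quasi-symmetry turns the quasi-triangle inequality into
`r 0 1 ≤ C² (r 0 k + r 1 k)` for `k ∈ {2, 3}` and `r 2 3 ≤ C² (r l 2 + r l 3)` for `l ∈ {0, 1}`.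
Choosing `k` and `l` at the endpoints of the smallest of the four cross distances
`r 0 2, r 0 3, r 1 2, r 1 3` makes each sum at most twice a cross distance, and the two surviving
cross distances always form one of the products on the right.
-/

structure IsQuasiDist {α : Type*} (C : ℝ) (r : α → α → ℝ) : Prop where
  one_le : 1 ≤ C
  nonneg : ∀ x y, 0 ≤ r x y
  le_mul_swap : ∀ x y, r x y ≤ C * r y x
  le_mul_add : ∀ x y z, r x y ≤ C * (r x z + r z y)

namespace IsQuasiDist

variable {α : Type*} {C : ℝ} {r : α → α → ℝ}

theorem le_sq_mul_add_to (h : IsQuasiDist C r) (x y z : α) :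
    r x y ≤ C ^ 2 * (r x z + r y z) := by
  have hC := h.one_le
  calc r x y ≤ C * (r x z + r z y) := h.le_mul_add x y z
    _ ≤ C * (C * r x z + C * r y z) := by
      gcongr
      · exact le_mul_of_one_le_left (h.nonneg x z) hC
      · exact h.le_mul_swap z y
    _ = C ^ 2 * (r x z + r y z) := by ring

theorem le_sq_mul_add_from (h : IsQuasiDist C r) (x y z : α) :
    r x y ≤ C ^ 2 * (r z x + r z y) := by
  have hC := h.one_le
  calc r x y ≤ C * (r x z + r z y) := h.le_mul_add x y z
    _ ≤ C * (C * r z x + C * r z y) := by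
      gcongr
      · exact h.le_mul_swap x z
      · exact le_mul_of_one_le_left (h.nonneg z y) hC
    _ = C ^ 2 * (r z x + r z y) := by ring

end IsQuasiDist

theorem add_mul_add_le_four_mul {m x y : ℝ} (hm : 0 ≤ m) (hx : m ≤ x) (hy : m ≤ y) :
    (m + x) * (m + y) ≤ 4 * (x * y) :=
  calc (m + x) * (m + y) ≤ (2 * x) * (2 * y) := by gcongr <;> linarith
    _ = 4 * (x * y) := by ring

theorem min_add_mul_min_add_le {a b c d : ℝ} (ha : 0 ≤ a) (hb : 0 ≤ b) (hc : 0 ≤ c)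
    (hd : 0 ≤ d) :
    min (a + c) (b + d) * min (a + b) (c + d) ≤ 4 * max (a * d) (b * c) := by
  set P := min (a + c) (b + d)
  set Q := min (a + b) (c + d)
  have hQ : 0 ≤ Q := le_min (by positivity) (by positivity)
  have hAD : 4 * (a * d) ≤ 4 * max (a * d) (b * c) := by gcongr; exact le_max_left _ _
  have hBC : 4 * (b * c) ≤ 4 * max (a * d) (b * c) := by gcongr; exact le_max_right _ _
  have of_min_a (hab : a ≤ b) (hac : a ≤ c) : P * Q ≤ 4 * max (a * d) (b * c) :=
    calc P * Q ≤ (a + c) * (a + b) :=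
          mul_le_mul (min_le_left _ _) (min_le_left _ _) hQ (by positivity)
      _ ≤ 4 * (c * b) := add_mul_add_le_four_mul ha hac hab
      _ ≤ _ := mul_comm c b ▸ hBC
  have of_min_b (hba : b ≤ a) (hbd : b ≤ d) : P * Q ≤ 4 * max (a * d) (b * c) :=
    calc P * Q ≤ (b + d) * (b + a) :=
          mul_le_mul (min_le_right _ _) (add_comm a b ▸ min_le_left _ _) hQ (by positivity)
      _ ≤ 4 * (d * a) := add_mul_add_le_four_mul hb hbd hba
      _ ≤ _ := mul_comm d a ▸ hAD
  have of_min_c (hca : c ≤ a) (hcd : c ≤ d) : P * Q ≤ 4 * max (a * d) (b * c) :=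
    calc P * Q ≤ (c + a) * (c + d) :=
          mul_le_mul (add_comm a c ▸ min_le_left _ _) (min_le_right _ _) hQ (by positivity)
      _ ≤ 4 * (a * d) := add_mul_add_le_four_mul hc hca hcd
      _ ≤ _ := hAD
  have of_min_d (hdb : d ≤ b) (hdc : d ≤ c) : P * Q ≤ 4 * max (a * d) (b * c) :=
    calc P * Q ≤ (d + b) * (d + c) :=
          mul_le_mul (add_comm b d ▸ min_le_right _ _) (add_comm c d ▸ min_le_right _ _) hQ
            (by positivity)
      _ ≤ 4 * (b * c) := add_mul_add_le_four_mul hd hdb hdc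
      _ ≤ _ := hBC
  rcases le_total a d with had | hda <;> rcases le_total b c with hbc | hcb
  · rcases le_total a b with hab | hba
    · exact of_min_a hab (hab.trans hbc)
    · exact of_min_b hba (hba.trans had)
  · rcases le_total a c with hac | hca
    · exact of_min_a (hac.trans hcb) hac
    · exact of_min_c hca (hca.trans had)
  · rcases le_total d b with hdb | hbd
    · exact of_min_d hdb (hdb.trans hbc)
    · exact of_min_b (hbd.trans hda) hbd
  · rcases le_total d c with hdc | hcd
    · exact of_min_d (hdc.trans hcb) hdc
    · exact of_min_c (hcd.trans hda) hcd

/-- Quadrilateral inequality for quasi-distances: if `r i j ≤ C * r j i` and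
`r i j ≤ C * (r i k + r k j)` for all indices in `{1,2,3,4}` (here `Fin 4`),
then `r 1 2 * r 3 4 ≤ 4 C^4 * max (r 1 3 * r 2 4) (r 1 4 * r 2 3)`. -/
theorem stmt0 (C : ℝ) (hC : 1 ≤ C) (r : Fin 4 → Fin 4 → ℝ)
    (hnonneg : ∀ i j, 0 ≤ r i j)
    (hsym : ∀ i j, r i j ≤ C * r j i)
    (htri : ∀ i j k, r i j ≤ C * (r i k + r k j)) :
    r 0 1 * r 2 3 ≤ 4 * C ^ 4 * max (r 0 2 * r 1 3) (r 0 3 * r 1 2) := by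
  have h : IsQuasiDist C r := ⟨hC, hnonneg, hsym, htri⟩
  have h01 : r 0 1 ≤ C ^ 2 * min (r 0 2 + r 1 2) (r 0 3 + r 1 3) := by
    rw [mul_min_of_nonneg _ _ (by positivity)]
    exact le_min (h.le_sq_mul_add_to 0 1 2) (h.le_sq_mul_add_to 0 1 3)
  have h23 : r 2 3 ≤ C ^ 2 * min (r 0 2 + r 0 3) (r 1 2 + r 1 3) := by
    rw [mul_min_of_nonneg _ _ (by positivity)]
    exact le_min (h.le_sq_mul_add_from 2 3 0) (h.le_sq_mul_add_from 2 3 1)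
  calc r 0 1 * r 2 3
      ≤ (C ^ 2 * min (r 0 2 + r 1 2) (r 0 3 + r 1 3)) *
          (C ^ 2 * min (r 0 2 + r 0 3) (r 1 2 + r 1 3)) :=
        mul_le_mul h01 h23 (hnonneg 2 3) (h01.trans' (hnonneg 0 1))
    _ = C ^ 4 * (min (r 0 2 + r 1 2) (r 0 3 + r 1 3) * min (r 0 2 + r 0 3) (r 1 2 + r 1 3)) := by
        ring
    _ ≤ C ^ 4 * (4 * max (r 0 2 * r 1 3) (r 0 3 * r 1 2)) :=
        mul_le_mul_of_nonneg_left
          (min_add_mul_min_add_le (hnonneg 0 2) (hnonneg 0 3) (hnonneg 1 2) (hnonneg 1 3))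
          (by positivity)
    _ = 4 * C ^ 4 * max (r 0 2 * r 1 3) (r 0 3 * r 1 2) := by ring
end

section
/- Suppose g, d : X × X → ℝ are functions with |g(x,y) − d(x,y)| ≤ C for all x,y, where g(x,y) = 2·log((D(x,y) + max(h(x),h(y)))/√(h(x)h(y))) for some functions D : X × X → [0,∞) and h : X → (0,∞), and D satisfies a quasi-symmetry D(x,y) ≤ C₁ D(y,x) and quasi-triangle inequality D(x,y) ≤ C₁(D(x,z)+D(z,y)). Then d satisfies the four-point condition d(x₁,x₂) + d(x₃,x₄) ≤ max(d(x₁,x₃)+d(x₂,x₄), d(x₁,x₄)+d(x₂,x₃)) + C' for a constant C' depending only on C and C₁. -/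
/-!
Write `β x y = D x y + max (h x) (h y)`, so that `g x y = 2 log β x y - log h x - log h y`.
The correction terms `log h` cancel in the four-point expression, so it suffices to prove the
four-point condition for `log β`, i.e. the multiplicative inequality
`β x₁ x₂ β x₃ x₄ ≤ K · max (β x₁ x₃ β x₂ x₄) (β x₁ x₄ β x₂ x₃)`.
Adding `max h` keeps `D` a quasi-pseudodistance, and for any quasi-pseudodistance this inequality
holds with `K = 4 C₁⁴`: bound `β x₁ x₂` and `β x₃ x₄` by the quasi-triangle inequality, routing
each through a point chosen so that the largest of `β x₁ x₃, β x₂ x₄, β x₁ x₄, β x₂ x₃` appears in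
neither bound.
Finally, the four-point condition survives an additive perturbation of size `C` at the cost `4C`.
-/

open Real

theorem mul_le_four_mul_of_le {a b p q r s M : ℝ} (hq : 0 ≤ q) (hr : 0 ≤ r)
    (hqp : q ≤ p) (hrp : r ≤ p) (hsp : s ≤ p) (hpq : p * q ≤ M) (hrs : r * s ≤ M)
    (ha : a ≤ r + q) (hb : b ≤ s + q) (hb0 : 0 ≤ b) : a * b ≤ 4 * M :=
  calc a * b ≤ (r + q) * (s + q) := mul_le_mul ha hb hb0 (by positivity)
    _ = r * s + r * q + q * s + q * q := by ring
    _ ≤ 4 * M := by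
      nlinarith [mul_le_mul_of_nonneg_right hrp hq, mul_le_mul_of_nonneg_right hsp hq,
        mul_le_mul_of_nonneg_right hqp hq]

theorem mul_le_four_mul_max {a b p q r s : ℝ} (hp : 0 ≤ p) (hq : 0 ≤ q) (hr : 0 ≤ r) (hs : 0 ≤ s)
    (hps : a ≤ p + s) (hrq : a ≤ r + q) (hpr : b ≤ p + r) (hsq : b ≤ s + q) (hb : 0 ≤ b) :
    a * b ≤ 4 * max (p * q) (r * s) := by
  have hMpq : p * q ≤ max (p * q) (r * s) := le_max_left _ _
  have hMrs : r * s ≤ max (p * q) (r * s) := le_max_right _ _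
  have hMqp : q * p ≤ max (p * q) (r * s) := mul_comm q p ▸ hMpq
  have hMsr : s * r ≤ max (p * q) (r * s) := mul_comm s r ▸ hMrs
  have hsp : a ≤ s + p := hps.trans_eq (add_comm p s)
  have hqr : a ≤ q + r := hrq.trans_eq (add_comm r q)
  have hrp : b ≤ r + p := hpr.trans_eq (add_comm p r)
  have hqs : b ≤ q + s := hsq.trans_eq (add_comm s q)
  rcases le_total q p with hqp | hpq <;> rcases le_total s r with hsr | hrs
  · rcases le_total r p with hrp' | hpr'
    · exact mul_le_four_mul_of_le hq hr hqp hrp' (hsr.trans hrp') hMpq hMrs hrq hsq hb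
    · exact mul_le_four_mul_of_le hs hp hsr hpr' (hqp.trans hpr') hMrs hMpq hps hqs hb
  · rcases le_total s p with hsp' | hps'
    · exact mul_le_four_mul_of_le hq hr hqp (hrs.trans hsp') hsp' hMpq hMrs hrq hsq hb
    · exact mul_le_four_mul_of_le hr hq hrs (hqp.trans hps') hps' hMsr hMqp hqr hpr hb
  · rcases le_total r q with hrq' | hqr'
    · exact mul_le_four_mul_of_le hp hs hpq (hsr.trans hrq') hrq' hMqp hMsr hsp hrp hb
    · exact mul_le_four_mul_of_le hs hp hsr (hpq.trans hqr') hqr' hMrs hMpq hps hqs hb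
  · rcases le_total s q with hsq' | hqs'
    · exact mul_le_four_mul_of_le hp hs hpq hsq' (hrs.trans hsq') hMqp hMsr hsp hrp hb
    · exact mul_le_four_mul_of_le hr hq hrs hqs' (hpq.trans hqs') hMsr hMqp hqr hpr hb

structure IsQuasiPseudoDist {X : Type*} (D : X → X → ℝ) (K : ℝ) : Prop where
  nonneg : ∀ x y, 0 ≤ D x y
  le_mul_swap : ∀ x y, D x y ≤ K * D y x
  le_mul_add : ∀ x y z, D x y ≤ K * (D x z + D z y)

namespace IsQuasiPseudoDist

variable {X : Type*} {D : X → X → ℝ} {K : ℝ}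

theorem add_max (hD : IsQuasiPseudoDist D K) (hK : 1 ≤ K) {h : X → ℝ} (hh : ∀ x, 0 ≤ h x) :
    IsQuasiPseudoDist (fun x y => D x y + max (h x) (h y)) K where
  nonneg x y := add_nonneg (hD.nonneg x y) ((hh x).trans (le_max_left _ _))
  le_mul_swap x y := by
    have hmax : max (h x) (h y) ≤ K * max (h y) (h x) := by
      rw [max_comm]
      exact le_mul_of_one_le_left ((hh y).trans (le_max_left _ _)) hK
    linarith [hD.le_mul_swap x y]
  le_mul_add x y z := by
    have hmax : max (h x) (h y) ≤ max (h x) (h z) + max (h z) (h y) :=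
      max_le (le_add_of_le_of_nonneg (le_max_left _ _) ((hh z).trans (le_max_left _ _)))
        (le_add_of_nonneg_of_le ((hh x).trans (le_max_left _ _)) (le_max_right _ _))
    have hsum : 0 ≤ max (h x) (h z) + max (h z) (h y) :=
      add_nonneg ((hh x).trans (le_max_left _ _)) ((hh z).trans (le_max_left _ _))
    nlinarith [hD.le_mul_add x y z]

theorem le_sq_mul_add_right (hD : IsQuasiPseudoDist D K) (hK : 1 ≤ K) (x y z : X) :
    D x y ≤ K ^ 2 * (D x z + D y z) := by
  have hK0 : 0 ≤ K := zero_le_one.trans hK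
  nlinarith [hD.le_mul_add x y z, mul_le_mul_of_nonneg_left (hD.le_mul_swap z y) hK0,
    mul_le_mul_of_nonneg_right (le_self_pow₀ hK two_ne_zero) (hD.nonneg x z)]

theorem le_sq_mul_add_left (hD : IsQuasiPseudoDist D K) (hK : 1 ≤ K) (x y z : X) :
    D x y ≤ K ^ 2 * (D z x + D z y) := by
  have hK0 : 0 ≤ K := zero_le_one.trans hK
  nlinarith [hD.le_mul_add x y z, mul_le_mul_of_nonneg_left (hD.le_mul_swap x z) hK0,
    mul_le_mul_of_nonneg_right (le_self_pow₀ hK two_ne_zero) (hD.nonneg z y)]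

theorem mul_le (hD : IsQuasiPseudoDist D K) (hK : 1 ≤ K) (x₁ x₂ x₃ x₄ : X) :
    D x₁ x₂ * D x₃ x₄ ≤
      4 * (K ^ 2) ^ 2 * max (D x₁ x₃ * D x₂ x₄) (D x₁ x₄ * D x₂ x₃) := by
  have hK2 : 0 ≤ K ^ 2 := sq_nonneg K
  have key := mul_le_four_mul_max (mul_nonneg hK2 (hD.nonneg x₁ x₃))
    (mul_nonneg hK2 (hD.nonneg x₂ x₄)) (mul_nonneg hK2 (hD.nonneg x₁ x₄))
    (mul_nonneg hK2 (hD.nonneg x₂ x₃))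
    ((hD.le_sq_mul_add_right hK x₁ x₂ x₃).trans_eq (mul_add _ _ _))
    ((hD.le_sq_mul_add_right hK x₁ x₂ x₄).trans_eq (by ring))
    ((hD.le_sq_mul_add_left hK x₃ x₄ x₁).trans_eq (mul_add _ _ _))
    ((hD.le_sq_mul_add_left hK x₃ x₄ x₂).trans_eq (mul_add _ _ _)) (hD.nonneg x₃ x₄)
  calc D x₁ x₂ * D x₃ x₄ ≤ _ := key
    _ = 4 * (K ^ 2) ^ 2 * max (D x₁ x₃ * D x₂ x₄) (D x₁ x₄ * D x₂ x₃) := by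
      rw [mul_assoc 4 ((K ^ 2) ^ 2), mul_max_of_nonneg _ _ (sq_nonneg (K ^ 2))]
      ring_nf

end IsQuasiPseudoDist

def GromovFourPoint {X : Type*} (d : X → X → ℝ) (δ : ℝ) : Prop :=
  ∀ x₁ x₂ x₃ x₄, d x₁ x₂ + d x₃ x₄ ≤ max (d x₁ x₃ + d x₂ x₄) (d x₁ x₄ + d x₂ x₃) + δ

section

variable {X : Type*} {δ : ℝ}

theorem gromovFourPoint_iff_or {d : X → X → ℝ} :
    GromovFourPoint d δ ↔ ∀ x₁ x₂ x₃ x₄, d x₁ x₂ + d x₃ x₄ ≤ d x₁ x₃ + d x₂ x₄ + δ ∨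
      d x₁ x₂ + d x₃ x₄ ≤ d x₁ x₄ + d x₂ x₃ + δ := by
  simp only [GromovFourPoint, ← max_add_add_right, le_max_iff]

namespace GromovFourPoint

theorem log_of_mul_le {f : X → X → ℝ} {K : ℝ} (hf : ∀ x y, 0 < f x y)
    (hK : ∀ x₁ x₂ x₃ x₄, f x₁ x₂ * f x₃ x₄ ≤ K * max (f x₁ x₃ * f x₂ x₄) (f x₁ x₄ * f x₂ x₃)) :
    GromovFourPoint (fun x y => log (f x y)) (log K) := by
  intro x₁ x₂ x₃ x₄
  have hlog_mul : ∀ a b c d : X, log (f a b) + log (f c d) = log (f a b * f c d) :=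
    fun a b c d => (log_mul (hf a b).ne' (hf c d).ne').symm
  have hM : 0 < max (f x₁ x₃ * f x₂ x₄) (f x₁ x₄ * f x₂ x₃) :=
    lt_max_of_lt_left (mul_pos (hf _ _) (hf _ _))
  have hK0 : 0 < K := pos_of_mul_pos_left ((mul_pos (hf _ _) (hf _ _)).trans_le (hK ..)) hM.le
  have hlog_max : max (log (f x₁ x₃ * f x₂ x₄)) (log (f x₁ x₄ * f x₂ x₃)) =
      log (max (f x₁ x₃ * f x₂ x₄) (f x₁ x₄ * f x₂ x₃)) :=
    (strictMonoOn_log.monotoneOn.map_max (mul_pos (hf _ _) (hf _ _))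
      (mul_pos (hf _ _) (hf _ _))).symm
  simp only [hlog_mul, hlog_max]
  rw [add_comm _ (log K), ← log_mul hK0.ne' hM.ne']
  exact log_le_log (mul_pos (hf _ _) (hf _ _)) (hK ..)

theorem two_mul_sub {F : X → X → ℝ} (hF : GromovFourPoint F δ) (u : X → ℝ) :
    GromovFourPoint (fun x y => 2 * F x y - (u x + u y)) (2 * δ) := by
  rw [gromovFourPoint_iff_or] at hF ⊢
  exact fun x₁ x₂ x₃ x₄ => (hF x₁ x₂ x₃ x₄).imp (fun h => by linarith) (fun h => by linarith)

theorem two_mul_log_div_sqrt {f : X → X → ℝ} {h : X → ℝ} (hf : ∀ x y, 0 < f x y)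
    (hh : ∀ x, 0 < h x) (hF : GromovFourPoint (fun x y => log (f x y)) δ) :
    GromovFourPoint (fun x y => 2 * log (f x y / √(h x * h y))) (2 * δ) := by
  convert hF.two_mul_sub (fun x => log (h x)) using 1
  funext x y
  rw [log_div (hf x y).ne' (sqrt_pos.2 (mul_pos (hh x) (hh y))).ne',
    log_sqrt (mul_pos (hh x) (hh y)).le, log_mul (hh x).ne' (hh y).ne']
  ring

theorem of_abs_sub_le {g d : X → X → ℝ} {C : ℝ} (hg : GromovFourPoint g δ)
    (hgd : ∀ x y, |g x y - d x y| ≤ C) : GromovFourPoint d (δ + 4 * C) := by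
  have hlo : ∀ x y, g x y - C ≤ d x y := fun x y => by linarith [(abs_le.1 (hgd x y)).2]
  have hup : ∀ x y, d x y ≤ g x y + C := fun x y => by linarith [(abs_le.1 (hgd x y)).1]
  rw [gromovFourPoint_iff_or] at hg ⊢
  intro x₁ x₂ x₃ x₄
  rcases hg x₁ x₂ x₃ x₄ with h | h
  · left
    linarith [hup x₁ x₂, hup x₃ x₄, hlo x₁ x₃, hlo x₂ x₄]
  · right
    linarith [hup x₁ x₂, hup x₃ x₄, hlo x₁ x₄, hlo x₂ x₃]

end GromovFourPoint

end

theorem stmt7_general (C C₁ : ℝ) (hC₁ : 1 ≤ C₁) :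
    ∃ C' : ℝ, ∀ (X : Type) (d D : X → X → ℝ) (h : X → ℝ),
      (∀ x, 0 < h x) →
      (∀ x y, 0 ≤ D x y) →
      (∀ x y, D x y ≤ C₁ * D y x) →
      (∀ x y z, D x y ≤ C₁ * (D x z + D z y)) →
      (∀ x y,
        |2 * Real.log ((D x y + max (h x) (h y)) / Real.sqrt (h x * h y)) - d x y| ≤ C) →
      ∀ x₁ x₂ x₃ x₄ : X,
        d x₁ x₂ + d x₃ x₄ ≤ max (d x₁ x₃ + d x₂ x₄) (d x₁ x₄ + d x₂ x₃) + C' := by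
  refine ⟨2 * log (4 * (C₁ ^ 2) ^ 2) + 4 * C, fun X d D h hh hD hswap htri hclose => ?_⟩
  have hβ : IsQuasiPseudoDist (fun x y => D x y + max (h x) (h y)) C₁ :=
    (IsQuasiPseudoDist.mk hD hswap htri).add_max hC₁ fun x => (hh x).le
  have hβpos : ∀ x y, 0 < D x y + max (h x) (h y) := fun x y =>
    add_pos_of_nonneg_of_pos (hD x y) ((hh x).trans_le (le_max_left _ _))
  exact ((GromovFourPoint.log_of_mul_le hβpos (hβ.mul_le hC₁)).two_mul_log_div_sqrt hβpos
    hh).of_abs_sub_le hclose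

/-- Abstract Balogh–Bonk argument: if a distance function `d` is uniformly (additively) close to
`g(x,y) = 2 log((D(x,y) + max(h x, h y))/√(h x · h y))`, where `D` is a quasi-pseudodistance
with constant `C₁` and `h > 0`, then `d` satisfies the four-point Gromov hyperbolicity
condition with a constant `C'` depending only on `C` and `C₁`. -/
theorem stmt7 (C C₁ : ℝ) (hC : 0 ≤ C) (hC₁ : 1 ≤ C₁) :
    ∃ C' : ℝ, ∀ (X : Type) (d D : X → X → ℝ) (h : X → ℝ),
      (∀ x, 0 < h x) →
      (∀ x y, 0 ≤ D x y) →
      (∀ x y, D x y ≤ C₁ * D y x) →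
      (∀ x y z, D x y ≤ C₁ * (D x z + D z y)) →
      (∀ x y,
        |2 * Real.log ((D x y + max (h x) (h y)) / Real.sqrt (h x * h y)) - d x y| ≤ C) →
      ∀ x₁ x₂ x₃ x₄ : X,
        d x₁ x₂ + d x₃ x₄ ≤ max (d x₁ x₃ + d x₂ x₄) (d x₁ x₄ + d x₂ x₃) + C' :=
  stmt7_general C C₁ hC₁
end

section
/- Let D : X × X → [0,∞) satisfy D(x,y) = 0 iff x = y, D(y,x) ≤ C·D(x,y), and D(x,y) ≤ C·(D(x,z) + D(z,y)) for some C ≥ 1. Then for sufficiently small ε > 0 the function ρ(x,y) = D(x,y)^ε + D(y,x)^ε is comparable to a genuine metric on X: there exists a metric d₀ on X and a constant A ≥ 1 with A^{-1}·ρ ≤ d₀ ≤ ρ. -/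
/-!
Set `σ(x,y) = max (D(x,y)^ε, D(y,x)^ε)`. The quasi-triangle inequality gives
`D(x,z) ≤ 2C max (D(x,y), D(y,z))`, so `σ(x,z) ≤ K max (σ(x,y), σ(y,z))` with `K = (2C)^ε`,
and `K² ≤ 2` once `ε` is small. Iterating, `σ(x₁,x₄) ≤ 2 max (σ(x₁,x₂), σ(x₂,x₃), σ(x₃,x₄))`,
which is exactly the hypothesis of Frink's chain lemma: the chain metric
`d₀(x,y) = inf ∑ σ(xᵢ,xᵢ₊₁)` over chains from `x` to `y` satisfies `σ ≤ 2 d₀ ≤ 2 σ`.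
Since `σ ≤ ρ ≤ 2σ`, this gives `ρ/4 ≤ d₀ ≤ ρ`.
-/

open NNReal

section Frink

variable {X : Type*} {σ : X → X → ℝ} {K : ℝ}

theorem le_two_mul_max_of_le_mul_max (hnonneg : ∀ x y, 0 ≤ σ x y) (hK : 1 ≤ K) (hK2 : K ^ 2 ≤ 2)
    (hσ : ∀ x y z, σ x z ≤ K * max (σ x y) (σ y z)) (x₁ x₂ x₃ x₄ : X) :
    σ x₁ x₄ ≤ 2 * max (σ x₁ x₂) (max (σ x₂ x₃) (σ x₃ x₄)) := by
  set M := max (σ x₁ x₂) (max (σ x₂ x₃) (σ x₃ x₄))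
  have hM : 0 ≤ M := le_max_of_le_left (hnonneg x₁ x₂)
  have h₂₄ : σ x₂ x₄ ≤ K * M :=
    (hσ x₂ x₃ x₄).trans (mul_le_mul_of_nonneg_left (le_max_right _ _) (by linarith))
  have h₁₂ : σ x₁ x₂ ≤ K * M := (le_max_left _ _).trans (le_mul_of_one_le_left hM hK)
  calc σ x₁ x₄ ≤ K * max (σ x₁ x₂) (σ x₂ x₄) := hσ x₁ x₂ x₄
    _ ≤ K * (K * M) := mul_le_mul_of_nonneg_left (max_le h₁₂ h₂₄) (by linarith)
    _ = K ^ 2 * M := by ring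
    _ ≤ 2 * M := mul_le_mul_of_nonneg_right hK2 hM

/-- Frink's chain construction. -/
theorem exists_pseudometric_comparable_of_le_mul_max (hnonneg : ∀ x y, 0 ≤ σ x y)
    (hself : ∀ x, σ x x = 0) (hsymm : ∀ x y, σ x y = σ y x) (hK : 1 ≤ K) (hK2 : K ^ 2 ≤ 2)
    (hσ : ∀ x y z, σ x z ≤ K * max (σ x y) (σ y z)) :
    ∃ d : X → X → ℝ, (∀ x y, d x y = d y x) ∧ (∀ x y z, d x y ≤ d x z + d z y) ∧
      ∀ x y, d x y ≤ σ x y ∧ σ x y ≤ 2 * d x y := by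
  let s : X → X → ℝ≥0 := fun x y => (σ x y).toNNReal
  have hs : ∀ x y, (s x y : ℝ) = σ x y := fun x y => Real.coe_toNNReal _ (hnonneg x y)
  have hs_self : ∀ x, s x x = 0 := fun x => by simp [s, hself]
  have hs_symm : ∀ x y, s x y = s y x := fun x y => by simp [s, hsymm]
  have hs_four : ∀ x₁ x₂ x₃ x₄, s x₁ x₄ ≤ 2 * max (s x₁ x₂) (max (s x₂ x₃) (s x₃ x₄)) := by
    intro x₁ x₂ x₃ x₄
    rw [← NNReal.coe_le_coe]
    push_cast [hs]
    exact le_two_mul_max_of_le_mul_max hnonneg hK hK2 hσ x₁ x₂ x₃ x₄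
  let _ := PseudoMetricSpace.ofPreNNDist s hs_self hs_symm
  refine ⟨dist, dist_comm, fun x y z => dist_triangle x z y, fun x y => ⟨?_, ?_⟩⟩
  · simpa [hs] using PseudoMetricSpace.dist_ofPreNNDist_le s hs_self hs_symm x y
  · simpa [hs] using PseudoMetricSpace.le_two_mul_dist_ofPreNNDist s hs_self hs_symm hs_four x y

end Frink

section Snowflake

variable {X : Type*} {D : X → X → ℝ} {C ε : ℝ}

theorem rpow_le_mul_max_of_quasi_triangle (hnonneg : ∀ x y, 0 ≤ D x y) (hC : 0 ≤ C)
    (htri : ∀ x y z, D x y ≤ C * (D x z + D z y)) (hε : 0 ≤ ε) (x y z : X) :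
    D x z ^ ε ≤ (2 * C) ^ ε * max (D x y ^ ε) (D y z ^ ε) := by
  have hmax : D x z ≤ 2 * C * max (D x y) (D y z) := by
    have := htri x z y
    nlinarith [le_max_left (D x y) (D y z), le_max_right (D x y) (D y z)]
  have hmax_rpow : max (D x y) (D y z) ^ ε ≤ max (D x y ^ ε) (D y z ^ ε) := by
    rcases max_choice (D x y) (D y z) with h | h <;> rw [h]
    exacts [le_max_left _ _, le_max_right _ _]
  calc D x z ^ ε ≤ (2 * C * max (D x y) (D y z)) ^ ε := Real.rpow_le_rpow (hnonneg x z) hmax hε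
    _ = (2 * C) ^ ε * max (D x y) (D y z) ^ ε :=
      Real.mul_rpow (by linarith) (le_max_of_le_left (hnonneg x y))
    _ ≤ (2 * C) ^ ε * max (D x y ^ ε) (D y z ^ ε) :=
      mul_le_mul_of_nonneg_left hmax_rpow (Real.rpow_nonneg (by linarith) ε)

noncomputable def snowflakeSymm (D : X → X → ℝ) (ε : ℝ) (x y : X) : ℝ :=
  max (D x y ^ ε) (D y x ^ ε)

theorem snowflakeSymm_comm (x y : X) : snowflakeSymm D ε x y = snowflakeSymm D ε y x :=
  max_comm _ _

theorem snowflakeSymm_nonneg (hnonneg : ∀ x y, 0 ≤ D x y) (x y : X) :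
    0 ≤ snowflakeSymm D ε x y :=
  le_max_of_le_left (Real.rpow_nonneg (hnonneg x y) ε)

theorem snowflakeSymm_eq_zero_iff (hnonneg : ∀ x y, 0 ≤ D x y) (heq : ∀ x y, D x y = 0 ↔ x = y)
    (hε : 0 < ε) {x y : X} : snowflakeSymm D ε x y = 0 ↔ x = y := by
  constructor
  · intro h
    have hxy : D x y ^ ε ≤ 0 := h ▸ le_max_left _ _
    have hxy : D x y ^ ε = 0 := le_antisymm hxy (Real.rpow_nonneg (hnonneg x y) ε)
    exact (heq x y).1 ((Real.rpow_eq_zero_iff_of_nonneg (hnonneg x y)).1 hxy).1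
  · rintro rfl
    simp [snowflakeSymm, (heq x x).2 rfl, Real.zero_rpow hε.ne']

theorem snowflakeSymm_le_add (hnonneg : ∀ x y, 0 ≤ D x y) (x y : X) :
    snowflakeSymm D ε x y ≤ D x y ^ ε + D y x ^ ε :=
  max_le (le_add_of_nonneg_right (Real.rpow_nonneg (hnonneg y x) ε))
    (le_add_of_nonneg_left (Real.rpow_nonneg (hnonneg x y) ε))

theorem add_le_two_mul_snowflakeSymm (x y : X) :
    D x y ^ ε + D y x ^ ε ≤ 2 * snowflakeSymm D ε x y := by
  unfold snowflakeSymm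
  linarith [le_max_left (D x y ^ ε) (D y x ^ ε), le_max_right (D x y ^ ε) (D y x ^ ε)]

theorem snowflakeSymm_le_mul_max (hnonneg : ∀ x y, 0 ≤ D x y) (hC : 0 ≤ C)
    (htri : ∀ x y z, D x y ≤ C * (D x z + D z y)) (hε : 0 ≤ ε) (x y z : X) :
    snowflakeSymm D ε x z ≤
      (2 * C) ^ ε * max (snowflakeSymm D ε x y) (snowflakeSymm D ε y z) := by
  have key := rpow_le_mul_max_of_quasi_triangle hnonneg hC htri hε
  have hmono : ∀ {a b c d : ℝ}, a ≤ c → b ≤ d →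
      (2 * C) ^ ε * max a b ≤ (2 * C) ^ ε * max c d := fun hac hbd =>
    mul_le_mul_of_nonneg_left (max_le_max hac hbd) (Real.rpow_nonneg (by linarith) ε)
  refine max_le ((key x y z).trans (hmono (le_max_left _ _) (le_max_left _ _))) ?_
  refine (key z y x).trans ?_
  rw [max_comm]
  exact hmono (le_max_right _ _) (le_max_right _ _)

end Snowflake

theorem stmt11_general {X : Type*} (D : X → X → ℝ) (C : ℝ) (hC : 1 ≤ C)
    (hnonneg : ∀ x y, 0 ≤ D x y)
    (heq : ∀ x y, D x y = 0 ↔ x = y)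
    (htri : ∀ x y z, D x y ≤ C * (D x z + D z y)) :
    ∃ ε₀ : ℝ, 0 < ε₀ ∧ ∀ ε : ℝ, 0 < ε → ε ≤ ε₀ →
      ∃ (d₀ : X → X → ℝ) (A : ℝ), 1 ≤ A ∧
        (∀ x y, 0 ≤ d₀ x y) ∧
        (∀ x y, d₀ x y = 0 ↔ x = y) ∧
        (∀ x y, d₀ x y = d₀ y x) ∧
        (∀ x y z, d₀ x y ≤ d₀ x z + d₀ z y) ∧
        (∀ x y, A⁻¹ * (D x y ^ ε + D y x ^ ε) ≤ d₀ x y ∧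
          d₀ x y ≤ D x y ^ ε + D y x ^ ε) := by
  have h2C : 1 < 2 * C := by linarith
  refine ⟨Real.logb (2 * C) 2 / 2, by have := Real.logb_pos h2C one_lt_two; positivity, ?_⟩
  intro ε hε hεle
  have hK2 : ((2 * C) ^ ε) ^ 2 ≤ 2 := by
    rw [← Real.rpow_natCast, ← Real.rpow_mul (by linarith)]
    calc (2 * C) ^ (ε * (2 : ℕ)) ≤ (2 * C) ^ Real.logb (2 * C) 2 :=
          Real.rpow_le_rpow_of_exponent_le h2C.le (by push_cast; linarith)
      _ = 2 := Real.rpow_logb (by linarith) h2C.ne' two_pos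
  obtain ⟨d, hd_symm, hd_tri, hd⟩ := exists_pseudometric_comparable_of_le_mul_max
    (snowflakeSymm_nonneg hnonneg) (fun x => (snowflakeSymm_eq_zero_iff hnonneg heq hε).2 rfl)
    snowflakeSymm_comm (Real.one_le_rpow h2C.le hε.le) hK2
    (snowflakeSymm_le_mul_max hnonneg (by linarith) htri hε.le)
  have hd_nonneg : ∀ x y, 0 ≤ d x y := fun x y => by
    linarith [(hd x y).2, snowflakeSymm_nonneg (ε := ε) hnonneg x y]
  refine ⟨d, 4, by norm_num, hd_nonneg, fun x y => ?_, hd_symm, hd_tri, fun x y => ⟨?_, ?_⟩⟩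
  · rw [← snowflakeSymm_eq_zero_iff hnonneg heq hε]
    constructor <;> intro h
    · linarith [(hd x y).2, snowflakeSymm_nonneg (ε := ε) hnonneg x y]
    · linarith [(hd x y).1, hd_nonneg x y]
  · linarith [(hd x y).2, add_le_two_mul_snowflakeSymm (ε := ε) (D := D) x y]
  · exact (hd x y).1.trans (snowflakeSymm_le_add hnonneg x y)

/-- Frink-type metrization: for a quasi-pseudodistance `D` (vanishing exactly on the diagonal,
quasi-symmetric and quasi-triangular with constant `C ≥ 1`), for all sufficiently small `ε > 0`
the snowflaked symmetrization `ρ(x,y) = D(x,y)^ε + D(y,x)^ε` is comparable to a genuine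
metric `d₀`: `A⁻¹ ρ ≤ d₀ ≤ ρ` for some `A ≥ 1`. -/
theorem stmt11 {X : Type*} (D : X → X → ℝ) (C : ℝ) (hC : 1 ≤ C)
    (hnonneg : ∀ x y, 0 ≤ D x y)
    (heq : ∀ x y, D x y = 0 ↔ x = y)
    (hsym : ∀ x y, D y x ≤ C * D x y)
    (htri : ∀ x y z, D x y ≤ C * (D x z + D z y)) :
    ∃ ε₀ : ℝ, 0 < ε₀ ∧ ∀ ε : ℝ, 0 < ε → ε ≤ ε₀ →
      ∃ (d₀ : X → X → ℝ) (A : ℝ), 1 ≤ A ∧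
        (∀ x y, 0 ≤ d₀ x y) ∧
        (∀ x y, d₀ x y = 0 ↔ x = y) ∧
        (∀ x y, d₀ x y = d₀ y x) ∧
        (∀ x y z, d₀ x y ≤ d₀ x z + d₀ z y) ∧
        (∀ x y, A⁻¹ * (D x y ^ ε + D y x ^ ε) ≤ d₀ x y ∧
          d₀ x y ≤ D x y ^ ε + D y x ^ ε) :=
  stmt11_general D C hC hnonneg heq htri
end

section
/- Let X be a set, h : X → (0,∞) bounded above by M, and D a quasi-pseudodistance on X with constant C₁. Define g(x,y) = 2·log((D(x,y) + max(h(x),h(y)))/√(h(x)h(y))). Then g is symmetric up to an additive constant: |g(x,y) − g(y,x)| ≤ 2·log C₁, and g(x,y) ≥ |log(h(x)/h(y))| for all x,y. -/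
/-!
For the first claim, quasi-symmetry of `D`
and `C₁ ≥ 1` give `D x y + m ≤ C₁ (D y x + m)` with `m = max (h x) (h y)`, and the two values of
`g` share the denominator `√(h x h y)`. For the second, if `h y ≤ h x` then
`log (h x / h y) = 2 log (h x / √(h x h y))`, and the numerator of `g` only grows by adding
`D x y ≥ 0`.
-/

open Real

/-- The Balogh–Bonk-type function `g` of the statement. -/
noncomputable def gromovProductBB {X : Type*} (D : X → X → ℝ) (h : X → ℝ) (x y : X) : ℝ :=
  2 * log ((D x y + max (h x) (h y)) / √(h x * h y))

lemma two_mul_log_div_sqrt_mul {a b : ℝ} (ha : 0 < a) (hb : 0 < b) :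
    2 * log (a / √(a * b)) = log (a / b) := by
  have hsq := Real.log_pow (a / √(a * b)) 2
  push_cast at hsq
  rw [← hsq, div_pow, sq_sqrt (mul_pos ha hb).le]
  congr 1
  field_simp

lemma abs_log_div_le_two_mul_log {a b d : ℝ} (ha : 0 < a) (hb : 0 < b) (hd : 0 ≤ d) :
    |log (a / b)| ≤ 2 * log ((d + max a b) / √(a * b)) := by
  wlog hba : b ≤ a generalizing a b
  · rw [← abs_neg, ← Real.log_inv, inv_div, max_comm a, mul_comm a]
    exact this hb ha (le_of_not_ge hba)
  rw [abs_of_nonneg (log_nonneg ((one_le_div hb).2 hba)), max_eq_left hba,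
    ← two_mul_log_div_sqrt_mul ha hb]
  gcongr
  linarith

section QuasiSymmetric

variable {X : Type*} {D : X → X → ℝ} {h : X → ℝ} {C : ℝ}

lemma gromovProductBB_sub_swap_le (hC : 1 ≤ C) (hD : ∀ x y, 0 ≤ D x y)
    (hsym : ∀ x y, D y x ≤ C * D x y) (hh : ∀ x, 0 < h x) (x y : X) :
    gromovProductBB D h x y - gromovProductBB D h y x ≤ 2 * log C := by
  set m := max (h x) (h y)
  have hm : 0 < m := (hh x).trans_le (le_max_left _ _)
  have hs : 0 < √(h x * h y) := sqrt_pos.2 (mul_pos (hh x) (hh y))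
  have hnum : D x y + m ≤ C * (D y x + m) := by
    rw [mul_add]
    gcongr
    · exact hsym y x
    · exact le_mul_of_one_le_left hm.le hC
  have hlog : log ((D x y + m) / √(h x * h y)) ≤ log C + log ((D y x + m) / √(h x * h y)) := by
    rw [← log_mul (by positivity) (by have := hD y x; positivity)]
    gcongr
    · have := hD x y; positivity
    · rw [mul_div_assoc']
      gcongr
  unfold gromovProductBB
  rw [max_comm (h y), mul_comm (h y)]
  linarith

lemma abs_gromovProductBB_sub_swap_le (hC : 1 ≤ C) (hD : ∀ x y, 0 ≤ D x y)
    (hsym : ∀ x y, D y x ≤ C * D x y) (hh : ∀ x, 0 < h x) (x y : X) :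
    |gromovProductBB D h x y - gromovProductBB D h y x| ≤ 2 * log C := by
  rw [abs_sub_le_iff]
  exact ⟨gromovProductBB_sub_swap_le hC hD hsym hh x y,
    gromovProductBB_sub_swap_le hC hD hsym hh y x⟩

end QuasiSymmetric

theorem stmt15_general {X : Type*} (D : X → X → ℝ) (h : X → ℝ) (C₁ : ℝ) (hC₁ : 1 ≤ C₁)
    (hnonneg : ∀ x y, 0 ≤ D x y)
    (hsym : ∀ x y, D y x ≤ C₁ * D x y)
    (hh : ∀ x, 0 < h x) :
    ∀ x y : X,
      |2 * Real.log ((D x y + max (h x) (h y)) / Real.sqrt (h x * h y)) -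
          2 * Real.log ((D y x + max (h y) (h x)) / Real.sqrt (h y * h x))| ≤
        2 * Real.log C₁ ∧
      |Real.log (h x / h y)| ≤
        2 * Real.log ((D x y + max (h x) (h y)) / Real.sqrt (h x * h y)) := fun x y =>
  ⟨abs_gromovProductBB_sub_swap_le hC₁ hnonneg hsym hh x y,
    abs_log_div_le_two_mul_log (hh x) (hh y) (hnonneg x y)⟩

/-- For `g(x,y) = 2 log((D(x,y) + max(h x, h y))/√(h x · h y))`, with `D` a quasi-pseudodistance
with constant `C₁` and `h : X → (0,∞)` bounded above by `M`: `g` is symmetric up to the additive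
constant `2 log C₁`, and `g(x,y) ≥ |log(h x / h y)|`. -/
theorem stmt15 {X : Type*} (D : X → X → ℝ) (h : X → ℝ) (C₁ M : ℝ) (hC₁ : 1 ≤ C₁)
    (hnonneg : ∀ x y, 0 ≤ D x y)
    (hsym : ∀ x y, D y x ≤ C₁ * D x y)
    (htri : ∀ x y z, D x y ≤ C₁ * (D x z + D z y))
    (hh : ∀ x, 0 < h x) (hM : ∀ x, h x ≤ M) :
    ∀ x y : X,
      |2 * Real.log ((D x y + max (h x) (h y)) / Real.sqrt (h x * h y)) -
          2 * Real.log ((D y x + max (h y) (h x)) / Real.sqrt (h y * h x))| ≤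
        2 * Real.log C₁ ∧
      |Real.log (h x / h y)| ≤
        2 * Real.log ((D x y + max (h x) (h y)) / Real.sqrt (h x * h y)) :=
  stmt15_general D h C₁ hC₁ hnonneg hsym hh
end
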